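/- Let k ≥ 1 and let t, a, u, b be positive integers with b ≤ a, u ≤ t, t ≤ m, t + a ≤ n + 1 and u + b ≤ n + 1. Let M be a monomial lying in J_u(b)^k ∩ J_t(a), and let F be the lexicographically smallest diagonal of type (t,a) dividing M. Then M/F ∈ J_u(b)^{k−1}. -/

import Mathlib

open MvPolynomial

/-- Admissible column selections for a diagonal of type `(t,a)`:
strictly increasing columns, all with (1-indexed) column number `≥ a`. -/
def NEcols (n t a : ℕ) (c : Fin t → Fin n) : Prop :=
  StrictMono c ∧ ∀ j, a ≤ (c j : ℕ) + 1

/-- The diagonal monomial `x_{1 b₁} ⋯ x_{t b_t}` with columns `c`. -/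
noncomputable def diagP (K : Type*) [Field K] (m n : ℕ) {t : ℕ} (c : Fin t → Fin n) :
    MvPolynomial (Fin m × Fin n) K :=
  ∏ j : Fin t,
    if h : (j : ℕ) < m then (X (⟨(j : ℕ), h⟩, c j) : MvPolynomial (Fin m × Fin n) K) else 0

/-- The monomial ideal `J_t(a)` generated by the diagonals of type `(t,a)`. -/
noncomputable def JIdeal (K : Type*) [Field K] (m n t a : ℕ) :
    Ideal (MvPolynomial (Fin m × Fin n) K) :=
  Ideal.span {f | ∃ c : Fin t → Fin n, NEcols n t a c ∧ f = diagP K m n c}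

/-- `c` gives the lexicographically smallest diagonal of type `(t,a)` dividing the
monomial `M`: the diagonal is of type `(t,a)`, divides `M`, and its column sequence is
lexicographically greatest among all diagonals of type `(t,a)` dividing `M`. -/
def IsSmallestDiagDividing (K : Type*) [Field K] (m n : ℕ) (t a : ℕ)
    (M : MvPolynomial (Fin m × Fin n) K) (c : Fin t → Fin n) : Prop :=
  NEcols n t a c ∧ diagP K m n c ∣ M ∧
    ∀ c' : Fin t → Fin n, NEcols n t a c' → diagP K m n c' ∣ M →
      c' = c ∨ ∃ j : Fin t, (∀ i < j, c' i = c i) ∧ c' j < c j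

/-!
Write `M = x^d`, let `δ₁, …, δ_k` be diagonals of type `(u,b)` whose product divides `M`, and let
`f i` be the column of `F` in row `i`. Since `F` is the lexicographically smallest diagonal, `M`
has no variable in row `i` strictly between the columns `f i` and `f (i+1)`: moving `F` there
would give a lexicographically smaller diagonal. Sorting every row of the `δ`'s produces `k`
diagonals again, and by the gap property a sorted diagonal that passes to the right of `F` in
some row stays to its right in all later rows. So the number `L i` of row-`i` entries `≤ f i`
decreases with `i`, and deleting the `L i`-th smallest entry of every row leaves `k - 1`
diagonals of type `(u,b)`. The deleted entry is `f i` whenever `f i` occurs in row `i`, so the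
product of the remaining diagonals divides `M/F`.
-/

open Finset

section Chains

variable {α : Type*} {k u : ℕ}

def rowMultiset (δ : Fin k → Fin u → α) (i : Fin u) : Multiset α :=
  Finset.univ.val.map fun s => δ s i

lemma mem_rowMultiset {δ : Fin k → Fin u → α} {i : Fin u} {x : α} :
    x ∈ rowMultiset δ i ↔ ∃ s, δ s i = x := by
  simp [rowMultiset]

lemma rowMultiset_succAbove_add_singleton (w : Fin (k + 1) → Fin u → α)
    (p : Fin u → Fin (k + 1)) (i : Fin u) :
    rowMultiset (fun s i => w ((p i).succAbove s) i) i + {w (p i) i} = rowMultiset w i := by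
  simp [rowMultiset, Fin.univ_succAbove _ (p i), add_comm, Function.comp_def]

lemma Fin.antitone_succAbove_left {k : ℕ} (s : Fin k) :
    Antitone fun p : Fin (k + 1) => p.succAbove s := by
  intro p q hpq
  simp only [Fin.succAbove, Fin.le_def, Fin.lt_def] at *
  split_ifs <;> simp
  omega

variable [LinearOrder α]

lemma Monotone.lt_of_lt_comp_perm {f g : Fin k → α} (hf : Monotone f) (hg : Monotone g)
    (σ : Equiv.Perm (Fin k)) (h : ∀ s, f s < g (σ s)) (s : Fin k) : f s < g s := by
  -- `σ` cannot map `Ici s` into `Ioi s`, which is smaller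
  obtain ⟨x, hsx, hxs⟩ : ∃ x, s ≤ x ∧ σ x ≤ s := by
    by_contra! hcon
    have := Finset.card_le_card_of_injOn σ (s := Finset.Ici s) (t := Finset.Ioi s)
      (fun x hx => by simpa using hcon x (by simpa using hx)) σ.injective.injOn
    simp only [Fin.card_Ici, Fin.card_Ioi] at this
    omega
  exact (hf hsx).trans_lt ((h x).trans_le (hg hxs))

def sortChains (δ : Fin k → Fin u → α) : Fin k → Fin u → α :=
  fun x i => δ (Tuple.sort (fun s => δ s i) x) i

lemma monotone_sortChains (δ : Fin k → Fin u → α) (i : Fin u) :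
    Monotone fun x => sortChains δ x i :=
  Tuple.monotone_sort (fun s => δ s i)

lemma rowMultiset_sortChains (δ : Fin k → Fin u → α) (i : Fin u) :
    rowMultiset (sortChains δ) i = rowMultiset δ i := by
  conv_rhs => rw [rowMultiset, ← Multiset.map_univ_val_equiv (Tuple.sort fun s => δ s i),
    Multiset.map_map]
  rfl

lemma strictMono_sortChains {δ : Fin k → Fin u → α} (hδ : ∀ s, StrictMono (δ s)) (x : Fin k) :
    StrictMono (sortChains δ x) := fun i j hij =>
  (monotone_sortChains δ i).lt_of_lt_comp_perm (monotone_sortChains δ j)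
    ((Tuple.sort fun s => δ s i).trans (Tuple.sort fun s => δ s j).symm)
    (fun y => by simpa [sortChains] using hδ _ hij) x

lemma strictMono_succAbove_of_antitone {w : Fin (k + 1) → Fin u → α}
    (hw : ∀ i, Monotone fun x => w x i) (hchain : ∀ x, StrictMono (w x))
    {p : Fin u → Fin (k + 1)} (hp : Antitone p) (s : Fin k) :
    StrictMono fun i => w ((p i).succAbove s) i := fun i j hij =>
  calc w ((p i).succAbove s) i < w ((p i).succAbove s) j := hchain _ hij
    _ ≤ w ((p j).succAbove s) j := hw j (Fin.antitone_succAbove_left s (hp hij.le))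

-- By truncated subtraction, this is `0` when no entry of row `i` is `≤ f i`.
def lastLePos (w : Fin (k + 1) → Fin u → α) (f : Fin u → α) (i : Fin u) : Fin (k + 1) :=
  ⟨#{x | w x i ≤ f i} - 1, by
    have := (card_filter_le univ fun x => w x i ≤ f i).trans_eq (card_fin _)
    omega⟩

lemma lastLePos_eq {w : Fin (k + 1) → Fin u → α} {f : Fin u → α} {i : Fin u}
    (hw : Monotone fun x => w x i) (hf : f i ∈ rowMultiset w i) :
    w (lastLePos w f i) i = f i := by
  obtain ⟨x, hx⟩ := mem_rowMultiset.1 hf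
  have hxL : (x : ℕ) < #{x | w x i ≤ f i} :=
    (Tuple.lt_card_le_iff_apply_le_of_monotone hw).2 hx.le
  refine le_antisymm ((Tuple.lt_card_le_iff_apply_le_of_monotone hw).1 ?_) (hx ▸ hw ?_)
  · simp only [lastLePos]; omega
  · simp only [lastLePos, Fin.le_def]; omega

lemma antitone_lastLePos {w : Fin (k + 1) → Fin u → α} {f : Fin u → α}
    (hprop : ∀ x i j, i ≤ j → f i < w x i → f j < w x j) : Antitone (lastLePos w f) := by
  intro i j hij
  have : #{x | w x j ≤ f j} ≤ #{x | w x i ≤ f i} :=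
    Finset.card_le_card fun x => by
      simp only [Finset.mem_filter, Finset.mem_univ, true_and]
      exact fun h => not_lt.1 fun h' => (hprop x i j hij h').not_ge h
  simp only [lastLePos, Fin.le_def]
  omega

lemma StrictMono.lt_of_lt_of_gap {e f : Fin u → α} (he : StrictMono e)
    (hgap : ∀ i j : Fin u, (i : ℕ) + 1 = j → ¬ (f i < e i ∧ e i < f j))
    {i j : Fin u} (hij : i ≤ j) (hi : f i < e i) : f j < e j := by
  obtain ⟨l, hl⟩ := Nat.exists_eq_add_of_le (Fin.le_def.1 hij)
  induction l generalizing j with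
  | zero => exact (Fin.ext (by omega) : i = j) ▸ hi
  | succ l ih =>
    have hl' : (i : ℕ) + l < u := by omega
    have hprev := ih (j := ⟨i + l, hl'⟩) (Fin.le_def.2 (by simp)) rfl
    have hstep : (⟨i + l, hl'⟩ : Fin u) < j := Fin.lt_def.2 (by simp; omega)
    by_contra! hj
    exact hgap _ j (by simp; omega) ⟨hprev, (he hstep).trans_le hj⟩

theorem exists_chains_erase_row {δ : Fin (k + 1) → Fin u → α} (hδ : ∀ s, StrictMono (δ s))
    (f : Fin u → α)
    (hgap : ∀ i j : Fin u, (i : ℕ) + 1 = j → ∀ x ∈ rowMultiset δ i, ¬ (f i < x ∧ x < f j)) :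
    ∃ ε : Fin k → Fin u → α, (∀ s, StrictMono (ε s)) ∧
      ∀ i, ∃ r, rowMultiset ε i + {r} = rowMultiset δ i ∧ (f i ∈ rowMultiset δ i → r = f i) := by
  set w := sortChains δ
  have hrow : ∀ i, rowMultiset w i = rowMultiset δ i := rowMultiset_sortChains δ
  have hprop : ∀ x i j, i ≤ j → f i < w x i → f j < w x j := fun x i j =>
    (strictMono_sortChains hδ x).lt_of_lt_of_gap fun i j hij =>
      hgap i j hij _ (hrow i ▸ mem_rowMultiset.2 ⟨x, rfl⟩)
  refine ⟨fun s i => w ((lastLePos w f i).succAbove s) i,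
    strictMono_succAbove_of_antitone (monotone_sortChains δ) (strictMono_sortChains hδ)
      (antitone_lastLePos hprop),
    fun i => ⟨w (lastLePos w f i) i, ?_, fun hf => ?_⟩⟩
  · rw [rowMultiset_succAbove_add_singleton, hrow]
  · exact lastLePos_eq (monotone_sortChains δ i) (hrow i ▸ hf)

lemma count_le_tsub_of_add_singleton_eq {A B : Multiset α} {r x : α} (hAB : A + {r} = B)
    (hr : x ∈ B → r = x) {D : α → ℕ} (hB : ∀ q, B.count q ≤ D q) (q : α) :
    A.count q ≤ D q - if x = q then 1 else 0 := by
  have hcount := congrArg (Multiset.count q) hAB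
  rw [Multiset.count_add, Multiset.count_singleton] at hcount
  have := hB q
  split_ifs at hcount ⊢ with hxq hrq hrq
  · omega
  · subst hxq
    have hxB : x ∉ B := fun h => hrq (hr h).symm
    rw [Multiset.count_eq_zero.2 hxB] at hcount
    omega
  · omega
  · omega

end Chains

lemma eq_monomial_tsub_of_monomial_eq_mul {σ R : Type*} [CommRing R] [IsDomain R]
    {d e : σ →₀ ℕ} {g : MvPolynomial σ R} (h : monomial d (1 : R) = monomial e 1 * g) :
    g = monomial (d - e) 1 := by
  have hed : e ≤ d :=
    (monomial_dvd_monomial.1 (Dvd.intro g h.symm)).1.resolve_left one_ne_zero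
  refine mul_left_cancel₀ (monomial_eq_zero.not.2 one_ne_zero : monomial e (1 : R) ≠ 0) ?_
  rw [← h, monomial_mul, one_mul, add_tsub_cancel_of_le hed]

section Monomials

variable {m n t : ℕ}

noncomputable def diagExp (ht : t ≤ m) (c : Fin t → Fin n) : (Fin m × Fin n) →₀ ℕ :=
  ∑ j, Finsupp.single (Fin.castLE ht j, c j) 1

lemma diagP_eq_monomial (K : Type*) [Field K] (ht : t ≤ m) (c : Fin t → Fin n) :
    diagP K m n c = monomial (diagExp ht c) 1 := by
  rw [diagP, diagExp, monomial_sum_one]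
  refine Finset.prod_congr rfl fun j _ => ?_
  rw [dif_pos (j.isLt.trans_le ht)]
  rfl

lemma diagExp_apply_castLE (ht : t ≤ m) (c : Fin t → Fin n) (i : Fin t) (q : Fin n) :
    diagExp ht c (Fin.castLE ht i, q) = if c i = q then 1 else 0 := by
  simp only [diagExp, Finsupp.finsetSum_apply, Finsupp.single_apply, Prod.mk.injEq,
    Fin.castLE_inj, ite_and, Finset.sum_ite_eq', Finset.mem_univ, if_true]

lemma diagExp_apply_of_le (ht : t ≤ m) (c : Fin t → Fin n) {r : Fin m} (hr : t ≤ r)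
    (q : Fin n) :
    diagExp ht c (r, q) = 0 := by
  simp only [diagExp, Finsupp.finsetSum_apply, Finsupp.single_apply, Prod.mk.injEq]
  refine Finset.sum_eq_zero fun j _ => if_neg fun h => ?_
  have := congrArg Fin.val h.1
  simp only [Fin.val_castLE] at this
  omega

lemma le_iff_forall_castLE (ht : t ≤ m) {x e : (Fin m × Fin n) →₀ ℕ}
    (hx : ∀ (r : Fin m) q, t ≤ r → x (r, q) = 0) :
    x ≤ e ↔ ∀ i q, x (Fin.castLE ht i, q) ≤ e (Fin.castLE ht i, q) := by
  refine ⟨fun h i q => h _, fun h ⟨r, q⟩ => ?_⟩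
  by_cases hr : (r : ℕ) < t
  · exact h ⟨r, hr⟩ q
  · simp [hx r q (not_lt.1 hr)]

lemma diagExp_le_iff (ht : t ≤ m) (c : Fin t → Fin n) (e : (Fin m × Fin n) →₀ ℕ) :
    diagExp ht c ≤ e ↔ ∀ i, 0 < e (Fin.castLE ht i, c i) := by
  rw [le_iff_forall_castLE ht fun r q hr => diagExp_apply_of_le ht c hr q]
  refine forall_congr' fun i => ⟨fun h => ?_, fun h q => ?_⟩
  · simpa [diagExp_apply_castLE, Nat.one_le_iff_ne_zero, pos_iff_ne_zero] using h (c i)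
  rw [diagExp_apply_castLE]
  split_ifs with hq
  exacts [hq ▸ h, Nat.zero_le _]

lemma diagP_dvd_monomial_iff (K : Type*) [Field K] (ht : t ≤ m) (c : Fin t → Fin n)
    (e : (Fin m × Fin n) →₀ ℕ) :
    diagP K m n c ∣ monomial e 1 ↔ ∀ i, 0 < e (Fin.castLE ht i, c i) := by
  rw [diagP_eq_monomial K ht, monomial_dvd_monomial, diagExp_le_iff]
  simp

lemma sum_diagExp_le_iff {k : ℕ} (ht : t ≤ m) (δ : Fin k → Fin t → Fin n)
    (e : (Fin m × Fin n) →₀ ℕ) :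
    ∑ s, diagExp ht (δ s) ≤ e ↔ ∀ i q, (rowMultiset δ i).count q ≤ e (Fin.castLE ht i, q) := by
  rw [le_iff_forall_castLE ht fun r q hr => by simp [diagExp_apply_of_le ht _ hr]]
  simp only [Finsupp.finsetSum_apply, diagExp_apply_castLE, sum_boole, rowMultiset,
    Multiset.count_map, Nat.cast_id]
  simp_rw [@eq_comm _ _ (δ _ _)]
  rfl

lemma monomial_mem_JIdeal_pow_iff (K : Type*) [Field K] {u b k : ℕ} (hu : u ≤ m)
    (e : (Fin m × Fin n) →₀ ℕ) :
    monomial e (1 : K) ∈ JIdeal K m n u b ^ k ↔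
      ∃ δ : Fin k → Fin u → Fin n, (∀ s, NEcols n u b (δ s)) ∧
        ∀ i q, (rowMultiset δ i).count q ≤ e (Fin.castLE hu i, q) := by
  simp_rw [← sum_diagExp_le_iff hu]
  constructor
  · intro h
    have hle : JIdeal K m n u b ^ k ≤ Ideal.span ((fun s => monomial s (1 : K)) ''
        {x | ∃ δ : Fin k → Fin u → Fin n, (∀ s, NEcols n u b (δ s)) ∧
          x = ∑ s, diagExp hu (δ s)}) := by
      rw [JIdeal, Ideal.span, Submodule.span_pow]
      refine Submodule.span_mono fun x hx => ?_
      obtain ⟨f, rfl⟩ := Set.mem_pow.1 hx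
      choose δ hδ hfδ using fun s => (f s).2
      refine ⟨_, ⟨δ, hδ, rfl⟩, ?_⟩
      simp only [List.prod_ofFn, hfδ, diagP_eq_monomial K hu, monomial_sum_one]
    obtain ⟨_, ⟨δ, hδ, rfl⟩, hδe⟩ := mem_ideal_span_monomial_image.1 (hle h) e (by simp)
    exact ⟨δ, hδ, hδe⟩
  · rintro ⟨δ, hδ, hδe⟩
    have hprod : ∏ s, diagP K m n (δ s) ∈ JIdeal K m n u b ^ k := by
      simpa using Ideal.prod_mem_prod (s := Finset.univ) (I := fun _ => JIdeal K m n u b)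
        fun s _ => Ideal.subset_span ⟨δ s, hδ s, rfl⟩
    have hfac : monomial e (1 : K) =
        (∏ s, diagP K m n (δ s)) * monomial (e - ∑ s, diagExp hu (δ s)) 1 := by
      simp only [diagP_eq_monomial K hu, ← monomial_sum_one, monomial_mul, one_mul,
        add_tsub_cancel_of_le hδe]
    exact hfac ▸ Ideal.mul_mem_right _ _ hprod

end Monomials

namespace IsSmallestDiagDividing

variable {K : Type*} [Field K] {m n t a : ℕ} {d : (Fin m × Fin n) →₀ ℕ} {c : Fin t → Fin n}

lemma le_of_dvd (ht : t ≤ m) (hc : IsSmallestDiagDividing K m n t a (monomial d 1) c)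
    {c' : Fin t → Fin n} (hc' : NEcols n t a c') (hdvd : diagP K m n c' ∣ monomial d 1)
    (i : Fin t) : c' i ≤ c i := by
  by_contra! hlt
  -- splicing `c` below `i` with `c'` from `i` on gives a lexicographically greater diagonal
  set c'' : Fin t → Fin n := fun j => if j < i then c j else c' j with hc''
  have hmono : StrictMono c'' := by
    intro x y hxy
    simp only [hc'']
    split_ifs with hx hy hy
    · exact hc.1.1 hxy
    · exact (hc.1.1 hx).trans (hlt.trans_le (hc'.1.monotone (not_lt.1 hy)))
    · exact absurd (hxy.trans hy) hx
    · exact hc'.1 hxy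
  have hcol : NEcols n t a c'' :=
    ⟨hmono, fun j => by simp only [hc'']; split_ifs; exacts [hc.1.2 j, hc'.2 j]⟩
  have hdvd'' : diagP K m n c'' ∣ monomial d 1 := by
    rw [diagP_dvd_monomial_iff K ht] at hdvd ⊢
    have hcd := (diagP_dvd_monomial_iff K ht c d).1 hc.2.1
    intro j
    simp only [hc'']
    split_ifs
    exacts [hcd j, hdvd j]
  rcases hc.2.2 c'' hcol hdvd'' with heq | ⟨j, hpre, hj⟩
  · exact hlt.ne' (by simpa [hc''] using congrFun heq i)
  · rcases lt_trichotomy j i with hji | rfl | hij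
    · simp [hc'', hji] at hj
    · simp only [hc'', lt_irrefl, if_false] at hj
      exact hj.not_gt hlt
    · have := hpre i hij
      simp only [hc'', lt_irrefl, if_false] at this
      exact hlt.ne' this

lemma exp_eq_zero_of_lt_of_lt (ht : t ≤ m)
    (hc : IsSmallestDiagDividing K m n t a (monomial d 1) c) {i j : Fin t}
    (hij : (i : ℕ) + 1 = j) {q : Fin n} (hiq : c i < q) (hqj : q < c j) :
    d (Fin.castLE ht i, q) = 0 := by
  by_contra hne
  have hmono : StrictMono (Function.update c i q) := by
    intro x y hxy
    simp only [Function.update_apply]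
    split_ifs with hx hy hy
    · exact absurd (hx ▸ hy ▸ hxy) (lt_irrefl _)
    · subst hx
      exact hqj.trans_le (hc.1.1.monotone (Fin.le_def.2 (by rw [Fin.lt_def] at hxy; omega)))
    · subst hy
      exact (hc.1.1 hxy).trans hiq
    · exact hc.1.1 hxy
  have hcol : NEcols n t a (Function.update c i q) := by
    refine ⟨hmono, fun j => ?_⟩
    rcases eq_or_ne j i with rfl | hj
    · have := hc.1.2 j
      rw [Function.update_self]
      rw [Fin.lt_def] at hiq
      omega
    · rw [Function.update_of_ne hj]
      exact hc.1.2 j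
  have hdvd : diagP K m n (Function.update c i q) ∣ monomial d 1 := by
    rw [diagP_dvd_monomial_iff K ht]
    intro j
    rcases eq_or_ne j i with rfl | hj
    · rw [Function.update_self]
      exact Nat.pos_of_ne_zero hne
    · rw [Function.update_of_ne hj]
      exact (diagP_dvd_monomial_iff K ht c d).1 hc.2.1 j
  have := hc.le_of_dvd ht hcol hdvd i
  rw [Function.update_self] at this
  exact this.not_gt hiq

end IsSmallestDiagDividing

theorem quotient_mem_pow_pred_of_smallest_diag_general (K : Type*) [Field K] (m n : ℕ)
    (k t a u b : ℕ)
    (hk : 1 ≤ k) (hut : u ≤ t) (htm : t ≤ m)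
    (d : (Fin m × Fin n) →₀ ℕ)
    (hM : monomial d (1 : K) ∈ JIdeal K m n u b ^ k ⊓ JIdeal K m n t a)
    (c : Fin t → Fin n)
    (hc : IsSmallestDiagDividing K m n t a (monomial d (1 : K)) c) :
    ∀ g : MvPolynomial (Fin m × Fin n) K,
      monomial d (1 : K) = diagP K m n c * g → g ∈ JIdeal K m n u b ^ (k - 1) := by
  intro g hg
  obtain ⟨k, rfl⟩ := Nat.exists_eq_add_of_le' hk
  have hum : u ≤ m := hut.trans htm
  have hcast : ∀ i : Fin u, Fin.castLE hum i = Fin.castLE htm (Fin.castLE hut i) := fun _ => rfl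
  obtain ⟨δ, hδ, hδd⟩ := (monomial_mem_JIdeal_pow_iff K hum d).1 hM.1
  obtain ⟨ε, hε, hεδ⟩ := exists_chains_erase_row (fun s => (hδ s).1)
    (fun i => c (Fin.castLE hut i)) fun i j hij x hx ⟨hix, hxj⟩ =>
      ((Multiset.count_pos.2 hx).trans_le (hδd i x)).ne' <|
        hc.exp_eq_zero_of_lt_of_lt htm (i := Fin.castLE hut i) (j := Fin.castLE hut j) hij hix hxj
  rw [diagP_eq_monomial K htm] at hg
  rw [eq_monomial_tsub_of_monomial_eq_mul hg, Nat.add_sub_cancel,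
    monomial_mem_JIdeal_pow_iff K hum]
  refine ⟨ε, fun s => ⟨hε s, fun i => ?_⟩, fun i q => ?_⟩
  · obtain ⟨r, hr, -⟩ := hεδ i
    have hmem : ε s i ∈ rowMultiset δ i := by
      rw [← hr]
      exact Multiset.mem_add.2 (Or.inl (mem_rowMultiset.2 ⟨s, rfl⟩))
    obtain ⟨s', hs'⟩ := mem_rowMultiset.1 hmem
    exact hs' ▸ (hδ s').2 i
  · obtain ⟨r, hr, hrf⟩ := hεδ i
    rw [Finsupp.tsub_apply, hcast, diagExp_apply_castLE]
    exact count_le_tsub_of_add_singleton_eq hr hrf (hδd i) q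

/-- Lemma `harder`. Let `b ≤ a`, `u ≤ t`, `k ≥ 1`. If the monomial
`M = X^d` lies in `J_u(b)^k ∩ J_t(a)` and `F` is the lexicographically smallest diagonal
of type `(t,a)` dividing `M`, then `M/F ∈ J_u(b)^{k-1}`. -/
theorem quotient_mem_pow_pred_of_smallest_diag (K : Type*) [Field K] (m n : ℕ)
    (hm : 1 ≤ m) (hmn : m ≤ n) (k t a u b : ℕ)
    (hk : 1 ≤ k) (hu : 1 ≤ u) (hb : 1 ≤ b) (hba : b ≤ a) (hut : u ≤ t) (htm : t ≤ m)
    (hta : t + a ≤ n + 1) (hub : u + b ≤ n + 1)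
    (d : (Fin m × Fin n) →₀ ℕ)
    (hM : monomial d (1 : K) ∈ JIdeal K m n u b ^ k ⊓ JIdeal K m n t a)
    (c : Fin t → Fin n)
    (hc : IsSmallestDiagDividing K m n t a (monomial d (1 : K)) c) :
    ∀ g : MvPolynomial (Fin m × Fin n) K,
      monomial d (1 : K) = diagP K m n c * g → g ∈ JIdeal K m n u b ^ (k - 1) :=
  quotient_mem_pow_pred_of_smallest_diag_general K m n k t a u b hk hut htm d hM c hc
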